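/- arXiv:1903.07900 — 2 statements merged into one kernel-verified Lean document; each statement's English description precedes it below -/
import Mathlib

section
/- Let X and Y be nonempty types, let F : X × Y → ℝ, and let Ω ⊆ X × Y. Define Z₁ = {(x,y) : (x,y) ∈ Ω and for every z with (x,z) ∈ Ω one has F(x,y) ≤ F(x,z)} and Z₂ = {(x,y) : (x,y) ∈ Ω and for every z ∈ Y one has F(x,y) ≤ F(x,z)}. Suppose (x₁*,y₁*) is the unique minimizer of F over Z₁, i.e., (x₁*,y₁*) ∈ Z₁, F(x₁*,y₁*) ≤ F(x,y) for all (x,y) ∈ Z₁, and any (x,y) ∈ Z₁ with F(x,y) = F(x₁*,y₁*) equals (x₁*,y₁*). Suppose further that y₁* is not a global minimizer of z ↦ F(x₁*,z) over Y, i.e., there exists z ∈ Y with F(x₁*,z) < F(x₁*,y₁*). Then for every (x₂*,y₂*) ∈ Z₂ that minimizes F over Z₂, one has F(x₁*,y₁*) < F(x₂*,y₂*). -/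
/-- Feasible set of the bilevel problem with the constraint set `Ω` enforced in the
lower level (problem 𝒫₁). -/
def Z₁ {X Y : Type*} (F : X × Y → ℝ) (Ω : Set (X × Y)) : Set (X × Y) :=
  {p | p ∈ Ω ∧ ∀ z : Y, (p.1, z) ∈ Ω → F p ≤ F (p.1, z)}

/-- Feasible set of the bilevel problem with unconstrained lower level and `Ω`
enforced at the upper level (problem 𝒫₂). -/
def Z₂ {X Y : Type*} (F : X × Y → ℝ) (Ω : Set (X × Y)) : Set (X × Y) :=
  {p | p ∈ Ω ∧ ∀ z : Y, F p ≤ F (p.1, z)}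

/-- If the unique minimizer of 𝒫₁ is such that its lower-level component is not a
global minimizer of the unconstrained lower-level problem, then the optimal value
of 𝒫₂ is strictly larger than that of 𝒫₁. -/
theorem stmt_3 {X Y : Type*} [Nonempty X] [Nonempty Y]
    (F : X × Y → ℝ) (Ω : Set (X × Y))
    (x₁ : X) (y₁ : Y)
    (hmem : (x₁, y₁) ∈ Z₁ F Ω)
    (hmin : ∀ p ∈ Z₁ F Ω, F (x₁, y₁) ≤ F p)
    (huniq : ∀ p ∈ Z₁ F Ω, F p = F (x₁, y₁) → p = (x₁, y₁))
    (hnotglobal : ∃ z : Y, F (x₁, z) < F (x₁, y₁)) :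
    ∀ p₂ ∈ Z₂ F Ω, (∀ p ∈ Z₂ F Ω, F p₂ ≤ F p) → F (x₁, y₁) < F p₂ := by
  intro p₂ hp₂ _
  have hZ : p₂ ∈ Z₁ F Ω := ⟨hp₂.1, fun z _ => hp₂.2 z⟩
  have hle : F (x₁, y₁) ≤ F p₂ := hmin p₂ hZ
  rcases lt_or_eq_of_le hle with h | h
  · exact h
  · exfalso
    have heq : p₂ = (x₁, y₁) := huniq p₂ hZ h.symm
    obtain ⟨z, hz⟩ := hnotglobal
    have := hp₂.2 z
    rw [heq] at this
    exact absurd this (not_le.mpr hz)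
end

section
/- Let n m : ℕ and D : ℕ. Let F : EuclideanSpace ℝ (Fin m) × EuclideanSpace ℝ (Fin n) → ℝ and g : Fin D → EuclideanSpace ℝ (Fin m) × EuclideanSpace ℝ (Fin n) → ℝ, and let Ω = {(x,y) : gᵢ(x,y) ≤ 0 for all i}. Define Z₁ = {(x,y) : (x,y) ∈ Ω and F(x,y) ≤ F(x,z) for every z with (x,z) ∈ Ω} and Z₂ = {(x,y) : (x,y) ∈ Ω and F(x,y) ≤ F(x,z) for every z}. Suppose (x₁*,y₁*) is the unique minimizer of F over Z₁. Suppose the functions y ↦ F(x₁*,y) and y ↦ gᵢ(x₁*,y) are differentiable at y₁*, that there exist multipliers λ : Fin D → ℝ with λᵢ ≥ 0, λᵢ · gᵢ(x₁*,y₁*) = 0 for all i, and gradient_y F(x₁*,y₁*) + Σᵢ λᵢ · gradient_y gᵢ(x₁*,y₁*) = 0, that some j satisfies gⱼ(x₁*,y₁*) = 0 and λⱼ > 0, and that the gradients gradient_y gᵢ(x₁*,y₁*) over the active indices {i : gᵢ(x₁*,y₁*) = 0} are linearly independent. Then for every (x₂*,y₂*) ∈ Z₂ that minimizes F over Z₂,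 one has F(x₁*,y₁*) < F(x₂*,y₂*). -/
/-- Corollary 1: if the unique optimal solution of 𝒫₁ has a strongly active
lower-level constraint (with linearly independent active constraint gradients at
the lower-level optimum), then the optimal value of 𝒫₂ is strictly larger than
that of 𝒫₁. -/
theorem stmt_5 (n m D : ℕ)
    (F : EuclideanSpace ℝ (Fin m) × EuclideanSpace ℝ (Fin n) → ℝ)
    (g : Fin D → EuclideanSpace ℝ (Fin m) × EuclideanSpace ℝ (Fin n) → ℝ)
    (Ω : Set (EuclideanSpace ℝ (Fin m) × EuclideanSpace ℝ (Fin n)))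
    (hΩ : Ω = {p | ∀ i, g i p ≤ 0})
    (x₁ : EuclideanSpace ℝ (Fin m)) (y₁ : EuclideanSpace ℝ (Fin n))
    (hmem : (x₁, y₁) ∈ Z₁ F Ω)
    (hmin : ∀ p ∈ Z₁ F Ω, F (x₁, y₁) ≤ F p)
    (huniq : ∀ p ∈ Z₁ F Ω, F p = F (x₁, y₁) → p = (x₁, y₁))
    (hF : DifferentiableAt ℝ (fun y => F (x₁, y)) y₁)
    (hg : ∀ i, DifferentiableAt ℝ (fun y => g i (x₁, y)) y₁)
    (lam : Fin D → ℝ)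
    (hlam_nonneg : ∀ i, 0 ≤ lam i)
    (hcompl : ∀ i, lam i * g i (x₁, y₁) = 0)
    (hstat : gradient (fun y => F (x₁, y)) y₁
        + ∑ i, lam i • gradient (fun y => g i (x₁, y)) y₁ = 0)
    (hstrong : ∃ j, g j (x₁, y₁) = 0 ∧ 0 < lam j)
    (hindep : LinearIndependent ℝ
      (fun i : {i : Fin D // g i (x₁, y₁) = 0} =>
        gradient (fun y => g i.1 (x₁, y)) y₁)) :
    ∀ p₂ ∈ Z₂ F Ω, (∀ p ∈ Z₂ F Ω, F p₂ ≤ F p) → F (x₁, y₁) < F p₂ := by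
    classical
  intro p₂ hp₂ _
  have hsub : p₂ ∈ Z₁ F Ω := ⟨hp₂.1, fun z _ => hp₂.2 z⟩
  rcases lt_or_eq_of_le (hmin p₂ hsub) with h | h
  · exact h
  exfalso
  have heq : p₂ = (x₁, y₁) := huniq p₂ hsub h.symm
  rw [heq] at hp₂
  have hlocmin : IsLocalMin (fun y => F (x₁, y)) y₁ :=
    (isMinOn_univ_iff.mpr (fun z => hp₂.2 z)).isLocalMin Filter.univ_mem
  have hgradF : gradient (fun y => F (x₁, y)) y₁ = 0 := by
    unfold gradient
    rw [hlocmin.fderiv_eq_zero, map_zero]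
  rw [hgradF, zero_add] at hstat
  have hlamzero : ∀ i, g i (x₁, y₁) ≠ 0 → lam i = 0 := fun i hi =>
    (mul_eq_zero.mp (hcompl i)).resolve_right hi
  have hsum : ∑ i : {i : Fin D // g i (x₁, y₁) = 0},
      lam i.1 • gradient (fun y => g i.1 (x₁, y)) y₁ = 0 := by
    rw [← hstat]
    rw [← Finset.sum_filter_of_ne (p := fun i => g i (x₁, y₁) = 0)
      (by intro i _ hne; by_contra hgi; exact hne ((hlamzero i hgi) ▸ (zero_smul ℝ _)) )]
    exact (Finset.sum_subtype
      (Finset.univ.filter (fun i => g i (x₁, y₁) = 0))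
      (fun x => by simp)
      (fun i => lam i • gradient (fun y => g i (x₁, y)) y₁)).symm
  obtain ⟨j, hj0, hjpos⟩ := hstrong
  have := Fintype.linearIndependent_iff.mp hindep (fun i => lam i.1) hsum ⟨j, hj0⟩
  exact hjpos.ne' this
end
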